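/- Fix 0 < r < 1 and set c_0 = −1/(e · ln(r) · (1−r)) and c̃_r = (log(2) − log(1−r)) / (−log(r) · log(2)), and let c_r = (6c_0 + 3)·c̃_r. Then for every d ≥ 1, every integer N ≥ 2, and every probability measure μ on [0,1]^d of the form μ = Σ_{i=1}^∞ α_i δ_{y_i} with α_i ≥ 0, Σ_i α_i = 1, and α_i ≤ r^{i−1} α_1 for all i, there exist points x_1, …, x_N ∈ [0,1]^d such that the empirical measure ν_N satisfies ρ(μ; ν_N) ≤ c_r · log(N)/N. -/

import Mathlib

open MeasureTheory Set
open scoped ENNReal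

/-- The empirical measure `ν_N = (1/N) ∑_{i=1}^N δ_{x_i}` associated to the points
`x 0, …, x (N-1)` in `[0,1]^d ⊆ ℝ^d`. -/
noncomputable def empMeasure (d N : ℕ) (x : Fin N → (Fin d → ℝ)) : Measure (Fin d → ℝ) :=
  (N : ℝ≥0∞)⁻¹ • ∑ i : Fin N, Measure.dirac (x i)

/-- The discrete measure `μ = ∑_{i=1}^∞ α_i δ_{y_i}`. -/
noncomputable def discreteMeasure (d : ℕ) (α : ℕ → ℝ) (y : ℕ → (Fin d → ℝ)) :
    Measure (Fin d → ℝ) :=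
  Measure.sum fun i => ENNReal.ofReal (α i) • Measure.dirac (y i)

/-!
Put `⌊N α_i⌋` of the points on each atom `y_i` with `1 ≤ i ≤ K` and the remaining ones on `y_0`.
On every atom `y_i` with `i ≥ 1` the empirical measure then undershoots `μ`, by less than `1/N`
for `i ≤ K` and by `α_i ≤ r^i` for `i > K`, while on `y_0` it overshoots by the total of these
deficits; hence `|μ(A) - ν_N(A)| ≤ K/N + r^(K+1)/(1-r)` for every `A`. With `s = -log r` and
`K = ⌊log N / s⌋` we get `N r^(K+1) ≤ 1`, and the bound is at most `(6c₀ + 3)/s · log N / N`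
(for `K = 0` by convexity of `L ↦ exp (L - s)` on `[log 2, s]`), which is `≤ c_r log N / N`
because `c̃_r ≥ 1/s`.
-/

lemma Multiset.exists_univ_map_eq {β : Type*} (m : Multiset β) {N : ℕ} (hN : card m = N) :
    ∃ x : Fin N → β, Finset.univ.val.map x = m := by
  subst hN
  induction m using Quotient.inductionOn with
  | h l => exact ⟨l.get, (Fin.univ_val_map _).trans (congrArg _ (List.ofFn_get l))⟩

lemma exists_fin_sum_eq_sum_nsmul {ι β M : Type*} [AddCommMonoid M] (s : Finset ι) (c : ι → ℕ)
    (y : ι → β) {N : ℕ} (hN : ∑ i ∈ s, c i = N) :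
    ∃ x : Fin N → β, (∀ j, ∃ i ∈ s, x j = y i) ∧
      ∀ f : β → M, ∑ j, f (x j) = ∑ i ∈ s, c i • f (y i) := by
  set m : Multiset β := ∑ i ∈ s, Multiset.replicate (c i) (y i)
  have hm : Multiset.card m = N := by simp [m, hN]
  obtain ⟨x, hx⟩ := m.exists_univ_map_eq hm
  refine ⟨x, fun j => ?_, fun f => ?_⟩
  · have : x j ∈ m := hx ▸ Multiset.mem_map_of_mem _ (Finset.mem_univ j)
    simp only [m, Multiset.mem_sum, Multiset.mem_replicate] at this
    exact this.imp fun i ⟨hi, _, h⟩ => ⟨hi, h⟩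
  · have : Finset.univ.val.map (fun j => f (x j)) = m.map f := by rw [← hx, Multiset.map_map]; rfl
    rw [Finset.sum_eq_multiset_sum, this, ← Multiset.coe_mapAddMonoidHom, map_sum,
      ← Multiset.coe_sumAddMonoidHom, map_sum]
    simp

lemma Summable.mul_of_nonneg_of_le_one {ι : Type*} {f χ : ι → ℝ} (hf : Summable f)
    (hχ0 : ∀ i, 0 ≤ χ i) (hχ1 : ∀ i, χ i ≤ 1) : Summable fun i => f i * χ i :=
  hf.abs.of_norm_bounded fun i => by
    rw [Real.norm_eq_abs, abs_mul, abs_of_nonneg (hχ0 i)]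
    exact mul_le_of_le_one_right (abs_nonneg _) (hχ1 i)

lemma empMeasure_apply_toReal (d N : ℕ) (x : Fin N → (Fin d → ℝ)) (A : Set (Fin d → ℝ)) :
    (empMeasure d N x A).toReal = (∑ j, A.indicator 1 (x j)) / N := by
  rw [empMeasure, Measure.smul_apply, Measure.finsetSum_apply, smul_eq_mul, ENNReal.toReal_mul,
    ENNReal.toReal_inv, ENNReal.toReal_natCast, ENNReal.toReal_sum fun j _ => measure_ne_top _ _,
    inv_mul_eq_div]
  congr 1
  refine Finset.sum_congr rfl fun j _ => ?_
  by_cases h : x j ∈ A <;> simp [h]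

lemma discreteMeasure_apply_toReal (d : ℕ) {α : ℕ → ℝ} (hα0 : ∀ i, 0 ≤ α i) (hα : Summable α)
    (y : ℕ → (Fin d → ℝ)) {A : Set (Fin d → ℝ)} (hA : MeasurableSet A) :
    (discreteMeasure d α y A).toReal = ∑' i, α i * A.indicator 1 (y i) := by
  have hχ0 : ∀ i, 0 ≤ A.indicator (1 : (Fin d → ℝ) → ℝ) (y i) := fun i =>
    indicator_nonneg (fun _ _ => zero_le_one) _
  have hterm : ∀ i, 0 ≤ α i * A.indicator 1 (y i) := fun i => mul_nonneg (hα0 i) (hχ0 i)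
  have hsum := hα.mul_of_nonneg_of_le_one hχ0 fun i =>
    indicator_apply_le' (fun _ => le_rfl) fun _ => zero_le_one
  rw [discreteMeasure, Measure.sum_apply _ hA, ← ENNReal.toReal_ofReal (tsum_nonneg hterm),
    ENNReal.ofReal_tsum_of_nonneg hterm hsum]
  congr 1
  refine tsum_congr fun i => ?_
  by_cases h : y i ∈ A <;> simp [h, hA]

lemma abs_tsum_mul_le_tsum_succ {g χ : ℕ → ℝ} (hg : HasSum g 0) (hpos : ∀ i, 0 ≤ g (i + 1))
    (hχ0 : ∀ i, 0 ≤ χ i) (hχ1 : ∀ i, χ i ≤ 1) : |∑' i, g i * χ i| ≤ ∑' i, g (i + 1) := by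
  have hgχ := hg.summable.mul_of_nonneg_of_le_one hχ0 hχ1
  set T := ∑' i, g (i + 1)
  have hT : 0 ≤ T := tsum_nonneg hpos
  have head : g 0 = -T := by linarith [hg.summable.tsum_eq_zero_add, hg.tsum_eq]
  have tail_le : ∑' i, g (i + 1) * χ (i + 1) ≤ T :=
    ((summable_nat_add_iff 1).2 hgχ).tsum_le_tsum
      (fun i => mul_le_of_le_one_right (hpos i) (hχ1 _)) ((summable_nat_add_iff 1).2 hg.summable)
  have tail_nonneg : 0 ≤ ∑' i, g (i + 1) * χ (i + 1) :=
    tsum_nonneg fun i => mul_nonneg (hpos i) (hχ0 _)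
  have := mul_nonneg hT (hχ0 0)
  have := mul_le_of_le_one_right hT (hχ1 0)
  rw [hgχ.tsum_eq_zero_add, head, abs_le]
  constructor <;> linarith

noncomputable def roundedCount (N K : ℕ) (α : ℕ → ℝ) : ℕ → ℕ
  | 0 => N - ∑ j ∈ Finset.range K, ⌊N * α (j + 1)⌋₊
  | i + 1 => if i < K then ⌊N * α (i + 1)⌋₊ else 0

section roundedCount

variable {α : ℕ → ℝ} {N K : ℕ}

lemma sum_range_natFloor_mul_le (hα0 : ∀ i, 0 ≤ α i) (hα : HasSum α 1) :
    ∑ j ∈ Finset.range K, ⌊N * α (j + 1)⌋₊ ≤ N := by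
  have : ∑ j ∈ Finset.range K, α (j + 1) ≤ 1 := by
    have := sum_le_hasSum (Finset.range (K + 1)) (fun i _ => hα0 i) hα
    rw [Finset.sum_range_succ'] at this
    linarith [hα0 0]
  have : (∑ j ∈ Finset.range K, ⌊N * α (j + 1)⌋₊ : ℝ) ≤ N :=
    calc (∑ j ∈ Finset.range K, ⌊N * α (j + 1)⌋₊ : ℝ)
        ≤ ∑ j ∈ Finset.range K, N * α (j + 1) :=
          Finset.sum_le_sum fun j _ => Nat.floor_le (by have := hα0 (j + 1); positivity)
      _ = N * ∑ j ∈ Finset.range K, α (j + 1) := (Finset.mul_sum ..).symm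
      _ ≤ N := mul_le_of_le_one_right (Nat.cast_nonneg N) this
  exact_mod_cast this

lemma roundedCount_eq_zero {i : ℕ} (hi : K < i) : roundedCount N K α i = 0 := by
  obtain ⟨i, rfl⟩ := Nat.exists_eq_add_one_of_ne_zero (by omega : i ≠ 0)
  simp [roundedCount, show ¬ i < K by omega]

lemma sum_range_roundedCount (hα0 : ∀ i, 0 ≤ α i) (hα : HasSum α 1) :
    ∑ i ∈ Finset.range (K + 1), roundedCount N K α i = N := by
  have : ∀ j ∈ Finset.range K, roundedCount N K α (j + 1) = ⌊N * α (j + 1)⌋₊ :=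
    fun j hj => if_pos (Finset.mem_range.1 hj)
  rw [Finset.sum_range_succ', Finset.sum_congr rfl this, roundedCount]
  exact Nat.add_sub_of_le (sum_range_natFloor_mul_le hα0 hα)

lemma hasSum_sub_roundedCount (hN : 0 < N) (hα0 : ∀ i, 0 ≤ α i) (hα : HasSum α 1) :
    HasSum (fun i => α i - roundedCount N K α i / N) 0 := by
  have hβ : HasSum (fun i => (roundedCount N K α i : ℝ) / N)
      (∑ i ∈ Finset.range (K + 1), (roundedCount N K α i : ℝ) / N) :=
    hasSum_sum_of_ne_finset_zero fun i hi => by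
      rw [roundedCount_eq_zero (by simpa using hi), Nat.cast_zero, zero_div]
  rw [← Finset.sum_div, ← Nat.cast_sum, sum_range_roundedCount hα0 hα,
    div_self (by positivity)] at hβ
  simpa using hα.sub hβ

lemma roundedCount_succ_div_le (hα0 : ∀ i, 0 ≤ α i) (i : ℕ) :
    (roundedCount N K α (i + 1) : ℝ) / N ≤ α (i + 1) := by
  rcases Nat.eq_zero_or_pos N with rfl | hN
  · simpa using hα0 _
  rw [div_le_iff₀' (by positivity)]
  have := hα0 (i + 1)
  by_cases hi : i < K
  · simpa [roundedCount, hi] using Nat.floor_le (by positivity : 0 ≤ (N : ℝ) * α (i + 1))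
  · simp only [roundedCount, hi, if_false, Nat.cast_zero]
    positivity

lemma tsum_sub_roundedCount_le (hN : 0 < N) (hα : Summable α) :
    ∑' i, (α (i + 1) - roundedCount N K α (i + 1) / N) ≤ K / N + ∑' i, α (i + K + 1) := by
  have hβ : Summable fun i => (roundedCount N K α (i + 1) : ℝ) / N :=
    summable_of_ne_finset_zero (s := Finset.range K) fun i hi => by
      rw [roundedCount_eq_zero (by simpa using hi), Nat.cast_zero, zero_div]
  have tail : ∀ i, α (i + K + 1) - roundedCount N K α (i + K + 1) / N = α (i + K + 1) := fun i => by
    rw [roundedCount_eq_zero (by omega), Nat.cast_zero, zero_div, sub_zero]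
  rw [← (((summable_nat_add_iff 1).2 hα).sub hβ).sum_add_tsum_nat_add K]
  simp only [tail]
  gcongr
  calc ∑ i ∈ Finset.range K, (α (i + 1) - roundedCount N K α (i + 1) / N)
      ≤ ∑ i ∈ Finset.range K, (1 / N : ℝ) := Finset.sum_le_sum fun i hi => by
        have hi : i < K := Finset.mem_range.1 hi
        rw [sub_le_iff_le_add, ← add_div, le_div_iff₀ (by positivity)]
        have := Nat.lt_floor_add_one ((N : ℝ) * α (i + 1))
        simp only [roundedCount, if_pos hi]
        linarith
    _ = K / N := by simp [div_eq_mul_inv]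

lemma tsum_mul_sub_sum_roundedCount_div {χ : ℕ → ℝ} (hαχ : Summable fun i => α i * χ i) :
    ∑' i, α i * χ i - (∑ i ∈ Finset.range (K + 1), roundedCount N K α i • χ i) / N =
      ∑' i, (α i - roundedCount N K α i / N) * χ i := by
  have hβχ : HasSum (fun i => (roundedCount N K α i : ℝ) / N * χ i)
      (∑ i ∈ Finset.range (K + 1), (roundedCount N K α i : ℝ) / N * χ i) :=
    hasSum_sum_of_ne_finset_zero fun i hi => by
      rw [roundedCount_eq_zero (by simpa using hi), Nat.cast_zero, zero_div, zero_mul]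
  simp only [sub_mul, (hαχ.hasSum.sub hβχ).tsum_eq, Finset.sum_div, nsmul_eq_mul]
  simp only [div_mul_eq_mul_div]

end roundedCount

theorem exists_abs_discreteMeasure_sub_empMeasure_le {d N : ℕ} (hN : 0 < N) (K : ℕ)
    {α : ℕ → ℝ} (hα0 : ∀ i, 0 ≤ α i) (hα : HasSum α 1) (y : ℕ → (Fin d → ℝ)) :
    ∃ x : Fin N → (Fin d → ℝ), (∀ j, ∃ i, x j = y i) ∧ ∀ A, MeasurableSet A →
      |(discreteMeasure d α y A).toReal - (empMeasure d N x A).toReal| ≤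
        K / N + ∑' i, α (i + K + 1) := by
  obtain ⟨x, hx_mem, hx_sum⟩ := exists_fin_sum_eq_sum_nsmul (M := ℝ) (Finset.range (K + 1))
    (roundedCount N K α) y (sum_range_roundedCount hα0 hα)
  refine ⟨x, fun j => (hx_mem j).imp fun _ => And.right, fun A hA => ?_⟩
  set χ : ℕ → ℝ := fun i => A.indicator 1 (y i)
  have hχ0 (i : ℕ) : 0 ≤ χ i := indicator_nonneg (fun _ _ => zero_le_one) _
  have hχ1 (i : ℕ) : χ i ≤ 1 := indicator_apply_le' (fun _ => le_rfl) fun _ => zero_le_one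
  rw [discreteMeasure_apply_toReal d hα0 hα.summable y hA, empMeasure_apply_toReal, hx_sum,
    tsum_mul_sub_sum_roundedCount_div (hα.summable.mul_of_nonneg_of_le_one hχ0 hχ1)]
  calc |∑' i, (α i - roundedCount N K α i / N) * χ i|
      ≤ ∑' i, (α (i + 1) - roundedCount N K α (i + 1) / N) :=
        abs_tsum_mul_le_tsum_succ (hasSum_sub_roundedCount hN hα0 hα)
          (fun i => sub_nonneg.2 (roundedCount_succ_div_le hα0 i)) hχ0 hχ1
    _ ≤ K / N + ∑' i, α (i + K + 1) := tsum_sub_roundedCount_le hN hα.summable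

lemma tsum_nat_add_le_geometric {α : ℕ → ℝ} {r : ℝ} (hα0 : ∀ i, 0 ≤ α i) (hαr : ∀ i, α i ≤ r ^ i)
    (hr1 : r < 1) (k : ℕ) : ∑' i, α (i + k) ≤ r ^ k / (1 - r) := by
  have hr0 : 0 ≤ r := by simpa using (hα0 1).trans (hαr 1)
  have hgeom := (summable_geometric_of_lt_one hr0 hr1).mul_left (r ^ k)
  have hle : ∀ i, α (i + k) ≤ r ^ k * r ^ i := fun i => (hαr _).trans_eq (by ring)
  calc ∑' i, α (i + k) ≤ ∑' i, r ^ k * r ^ i :=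
        (hgeom.of_nonneg_of_le (fun i => hα0 _) hle).tsum_le_tsum hle hgeom
    _ = r ^ k / (1 - r) := by rw [tsum_mul_left, tsum_geometric_of_lt_one hr0 hr1, div_eq_mul_inv]

namespace Real

lemma sq_mul_exp_neg_le {s : ℝ} (hs : 0 ≤ s) : s ^ 2 * exp (-s) ≤ 4 * exp (-2) := by
  have half : s / 2 ≤ exp (s / 2 - 1) := by linarith [add_one_le_exp (s / 2 - 1)]
  have sq_le : s ^ 2 ≤ 4 * exp (s - 2) := by
    have h := pow_le_pow_left₀ (by linarith) half 2
    rw [← exp_nat_mul, Nat.cast_ofNat, show 2 * (s / 2 - 1) = s - 2 by ring] at h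
    linarith
  calc s ^ 2 * exp (-s) ≤ 4 * exp (s - 2) * exp (-s) := by gcongr
    _ = 4 * exp (-2) := by rw [mul_assoc, ← exp_add]; ring_nf

lemma one_le_two_mul_one_sub_exp_neg_div_add_mul {s : ℝ} (hs : 0 < s) :
    1 ≤ (2 * (1 - exp (-s)) / s + 6 / (exp 1 * s ^ 2)) * s := by
  have : (2 * (1 - exp (-s)) / s + 6 / (exp 1 * s ^ 2)) * s =
      2 * (1 - exp (-s)) + 6 / (exp 1 * s) := by
    field_simp
  rw [this]
  rcases le_or_gt 1 s with hs1 | hs1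
  · have : exp (-s) ≤ 1 / 2 := by
      rw [exp_neg, one_div]
      gcongr
      linarith [add_one_le_exp s]
    have : 0 ≤ 6 / (exp 1 * s) := by positivity
    linarith
  · have : 2 ≤ 6 / (exp 1 * s) := by
      rw [le_div_iff₀ (by positivity)]
      nlinarith [exp_one_lt_d9, exp_pos 1]
    linarith [exp_le_one_iff.2 (neg_nonpos.2 hs.le)]

/-- By convexity of `exp` it suffices to check the endpoints `L = log 2` and `L = s`. -/
lemma exp_sub_le_mul_of_le {s L : ℝ} (hL2 : log 2 ≤ L) (hLs : L ≤ s) :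
    exp (L - s) ≤ (2 * (1 - exp (-s)) / s + 6 / (exp 1 * s ^ 2)) * L := by
  set B := 2 * (1 - exp (-s)) / s + 6 / (exp 1 * s ^ 2)
  have hs : 0 < s := (log_pos one_lt_two).trans_le (hL2.trans hLs)
  have hr : 0 ≤ 1 - exp (-s) := by linarith [exp_le_one_iff.2 (neg_nonpos.2 hs.le)]
  have hlog2 := log_two_gt_d9
  have hB : 0 ≤ B := by positivity
  have at_s : 1 ≤ B * s := one_le_two_mul_one_sub_exp_neg_div_add_mul hs
  have at_log_two : 2 * exp (-s) ≤ B * log 2 := by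
    have hexp : exp (-2) * exp 1 ≤ 1 / 2 := by
      rw [← exp_add, show (-2 : ℝ) + 1 = -1 by norm_num, exp_neg, one_div]
      gcongr
      linarith [add_one_le_exp 1]
    calc 2 * exp (-s) ≤ 6 / (exp 1 * s ^ 2) * log 2 := by
          rw [div_mul_eq_mul_div, le_div_iff₀ (by positivity)]
          nlinarith [sq_mul_exp_neg_le hs.le, exp_pos 1]
      _ ≤ B * log 2 := by
          gcongr
          exact le_add_of_nonneg_left (by positivity)
  have hconv : ConvexOn ℝ univ (fun x => exp (-s) * exp x - B * x) :=
    (convexOn_exp.smul (exp_pos _).le).sub ((concaveOn_id convex_univ).smul hB)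
  have := hconv.le_on_segment (mem_univ (log 2)) (mem_univ s)
    (by rw [segment_eq_Icc (hL2.trans hLs)]; exact ⟨hL2, hLs⟩)
  simp only [← exp_add, exp_log two_pos, neg_add_cancel, exp_zero, neg_add_eq_sub] at this
  have : max (exp (-s) * 2 - B * log 2) (1 - B * s) ≤ 0 := max_le (by linarith) (by linarith)
  linarith

lemma natFloor_add_exp_div_le {s L : ℝ} (hs : 0 < s) (hL : log 2 ≤ L) :
    ⌊L / s⌋₊ + exp (L - s * (⌊L / s⌋₊ + 1)) / (1 - exp (-s)) ≤
      (3 + 6 / (exp 1 * s * (1 - exp (-s)))) / s * L := by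
  set K := ⌊L / s⌋₊
  set B := 2 * (1 - exp (-s)) / s + 6 / (exp 1 * s ^ 2)
  have hr : 0 < 1 - exp (-s) := by linarith [exp_lt_one_iff.2 (neg_lt_zero.2 hs)]
  have hL0 : 0 ≤ L := (log_pos one_lt_two).le.trans hL
  have hK : (K : ℝ) ≤ L / s := Nat.floor_le (by positivity)
  have tail : exp (L - s * (K + 1)) ≤ B * L := by
    rcases le_or_gt s L with hsL | hLs
    · have lt_K : L < s * (K + 1) := by
        rw [← div_lt_iff₀' hs]; exact Nat.lt_floor_add_one _
      have hB : 0 ≤ B := by positivity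
      calc exp (L - s * (K + 1)) ≤ 1 := exp_le_one_iff.2 (by linarith)
        _ ≤ B * s := one_le_two_mul_one_sub_exp_neg_div_add_mul hs
        _ ≤ B * L := by gcongr
    · have : K = 0 := Nat.floor_eq_zero.2 ((div_lt_one hs).2 hLs)
      simpa [this] using exp_sub_le_mul_of_le hL hLs.le
  calc (K : ℝ) + exp (L - s * (K + 1)) / (1 - exp (-s)) ≤ L / s + B * L / (1 - exp (-s)) := by
        gcongr
    _ = (3 + 6 / (exp 1 * s * (1 - exp (-s)))) / s * L := by
        simp only [B]; field_simp; ring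

lemma inv_neg_log_le_div {r : ℝ} (hr0 : 0 < r) (hr1 : r < 1) :
    (-log r)⁻¹ ≤ (log 2 - log (1 - r)) / (-log r * log 2) := by
  have hs : 0 < -log r := neg_pos.2 (log_neg hr0 hr1)
  have h1r : log (1 - r) ≤ 0 := log_nonpos (by linarith) (by linarith)
  rw [inv_eq_one_div, div_le_div_iff₀ hs (mul_pos hs (log_pos one_lt_two))]
  nlinarith

lemma natFloor_div_add_pow_div_le {r : ℝ} (hr0 : 0 < r) (hr1 : r < 1) {N : ℕ} (hN : 2 ≤ N) :
    (⌊log N / -log r⌋₊ : ℝ) / N + r ^ (⌊log N / -log r⌋₊ + 1) / (1 - r) ≤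
      (6 * (-1 / (exp 1 * log r * (1 - r))) + 3) *
        ((log 2 - log (1 - r)) / (-log r * log 2)) * log N / N := by
  set K := ⌊log N / -log r⌋₊
  have hN0 : (0 : ℝ) < N := by positivity
  have hr : 0 < 1 - r := by linarith
  have h_inv_le := inv_neg_log_le_div hr0 hr1
  set s := -log r
  have hs : 0 < s := neg_pos.2 (log_neg hr0 hr1)
  have hrs : exp (-s) = r := by rw [neg_neg, exp_log hr0]
  have hpow : exp (log N - s * (K + 1)) = N * r ^ (K + 1) := by
    rw [sub_eq_add_neg, exp_add, exp_log hN0, ← hrs, ← exp_nat_mul]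
    push_cast; ring_nf
  have key := natFloor_add_exp_div_le hs (log_le_log two_pos (by exact_mod_cast hN : (2 : ℝ) ≤ N))
  rw [hpow, hrs] at key
  calc (K : ℝ) / N + r ^ (K + 1) / (1 - r) = (K + N * r ^ (K + 1) / (1 - r)) / N := by
        field_simp
    _ ≤ (3 + 6 / (exp 1 * s * (1 - r))) * s⁻¹ * log N / N := by rw [← div_eq_mul_inv]; gcongr
    _ ≤ (3 + 6 / (exp 1 * s * (1 - r))) * ((log 2 - log (1 - r)) / (s * log 2)) * log N / N := by
        gcongr
    _ = _ := by
        rw [show log r = -s by simp [s]]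
        field_simp
        ring

end Real

/-- With the explicit constants `c₀ = −1/(e ln r (1−r))`,
`c̃_r = (log 2 − log(1−r))/(−log r · log 2)` and `c_r = (6c₀+3) c̃_r`:
for every `d ≥ 1`, `N ≥ 2` and every discrete probability measure
`μ = ∑ α_i δ_{y_i}` on `[0,1]^d` with `α_i ≤ r^(i−1) α_1`, there are points
`x_1, …, x_N ∈ [0,1]^d` with `ρ(μ; ν_N) ≤ c_r log N / N` (total variation,
stated over every Borel set). -/
theorem stmt5 (r : ℝ) (hr0 : 0 < r) (hr1 : r < 1)
    (c₀ : ℝ) (hc₀ : c₀ = -1 / (Real.exp 1 * Real.log r * (1 - r)))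
    (ctil : ℝ) (hctil : ctil = (Real.log 2 - Real.log (1 - r)) / (-Real.log r * Real.log 2))
    (cr : ℝ) (hcr : cr = (6 * c₀ + 3) * ctil) :
    ∀ (d : ℕ), 1 ≤ d →
    ∀ (N : ℕ), 2 ≤ N →
    ∀ (α : ℕ → ℝ) (y : ℕ → (Fin d → ℝ)),
      (∀ i, 0 ≤ α i) →
      (∑' i, α i) = 1 →
      (∀ i, y i ∈ Icc (0 : Fin d → ℝ) 1) →
      (∀ i : ℕ, α i ≤ r ^ i * α 0) →
      ∃ x : Fin N → (Fin d → ℝ),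
        (∀ i, x i ∈ Icc (0 : Fin d → ℝ) 1) ∧
        ∀ A : Set (Fin d → ℝ), MeasurableSet A →
          |((discreteMeasure d α y) A).toReal - ((empMeasure d N x) A).toReal| ≤
            cr * Real.log N / N := by
  intro d _ N hN α y hα0 hα1 hy hαr
  have hα : HasSum α 1 := by
    refine hα1 ▸ (Summable.hasSum (by_contra fun h => ?_))
    rw [tsum_eq_zero_of_not_summable h] at hα1
    exact zero_ne_one hα1
  have hα_pow (i : ℕ) : α i ≤ r ^ i :=
    (hαr i).trans (mul_le_of_le_one_right (by positivity) (le_hasSum hα 0 fun j _ => hα0 j))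
  set K := ⌊Real.log N / -Real.log r⌋₊
  obtain ⟨x, hx_mem, hx_le⟩ :=
    exists_abs_discreteMeasure_sub_empMeasure_le (by omega : 0 < N) K hα0 hα y
  refine ⟨x, fun j => ?_, fun A hA => (hx_le A hA).trans ?_⟩
  · obtain ⟨i, hi⟩ := hx_mem j
    exact hi ▸ hy i
  calc (K : ℝ) / N + ∑' i, α (i + K + 1) ≤ K / N + r ^ (K + 1) / (1 - r) := by
        gcongr; exact tsum_nat_add_le_geometric hα0 hα_pow hr1 (K + 1)
    _ ≤ cr * Real.log N / N := by
        subst hcr hctil hc₀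
        exact Real.natFloor_div_add_pow_div_le hr0 hr1 hN
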